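/- Let A be a real m×n matrix and fix r < min(m,n). Suppose index sets I, J of size r are chosen so that A_{I,J} has maximal volume (maximal |det|) among all r×r submatrices of A. Then the cross approximation A_r = A_{:,J} A_{I,J}^{-1} A_{I,:} satisfies ‖A − A_r‖_C ≤ (r+1)·σ_{r+1}(A). -/

import Mathlib

/-!
Fix `(i, j)` and let `B` be the restriction of `A` to the rows `I ∪ {i}` and columns `J ∪ {j}`.
By the Schur complement formula `det B = det A_{I,J} · (A - A_r)_{ij}`. Maximality of the volume
bounds every `r × r` minor of `B`, hence every entry of `adj B`, by `|det A_{I,J}|`, so every entry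
of `B⁻¹` is at most `1 / |(A - A_r)_{ij}|`. Therefore `‖B y‖ ≥ |(A - A_r)_{ij}| ‖y‖ / (r + 1)` for
all `y`; as `B` is a row selection of the `r + 1` columns `J ∪ {j}` of `A`, the Courant–Fischer
principle gives `σ_{r+1}(A) ≥ |(A - A_r)_{ij}| / (r + 1)`.
-/

open Matrix BigOperators Filter

noncomputable def sval {m n : ℕ} (A : Matrix (Fin m) (Fin n) ℝ) (k : Fin n) : ℝ :=
  Real.sqrt ((Matrix.isHermitian_conjTranspose_mul_self A).eigenvalues
    (Tuple.sort (Matrix.isHermitian_conjTranspose_mul_self A).eigenvalues (Fin.rev k)))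

noncomputable def chebNorm {m n : ℕ} (A : Matrix (Fin m) (Fin n) ℝ) : ℝ :=
  ⨆ i, ⨆ j, |A i j|

noncomputable def frobNorm {m n : ℕ} (A : Matrix (Fin m) (Fin n) ℝ) : ℝ :=
  Real.sqrt (∑ i, ∑ j, (A i j) ^ 2)

namespace Matrix

lemma injective_of_det_submatrix_ne_zero {R : Type*} [CommRing R] {m n k : Type*} [Fintype k]
    [DecidableEq k] {A : Matrix m n R} {I : k → m} {J : k → n} (h : (A.submatrix I J).det ≠ 0) :
    Function.Injective I ∧ Function.Injective J :=
  ⟨fun a b hab => by_contra fun hne => h (det_zero_of_row_eq hne (by ext; simp [hab])),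
   fun a b hab => by_contra fun hne => h (det_zero_of_column_eq hne (by simp [hab]))⟩

lemma det_submatrix_snoc {R : Type*} [CommRing R] {m n : Type*} {r : ℕ} (A : Matrix m n R)
    (I : Fin r → m) (J : Fin r → n) (hinv : IsUnit (A.submatrix I J)) (i : m) (j : n) :
    (A.submatrix (Fin.snoc I i) (Fin.snoc J j)).det = (A.submatrix I J).det *
      (A - A.submatrix id J * (A.submatrix I J)⁻¹ * A.submatrix I id) i j := by
  let := hinv.invertible
  have hblocks : (A.submatrix (Fin.snoc I i) (Fin.snoc J j)).submatrix finSumFinEquiv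
      finSumFinEquiv = fromBlocks (A.submatrix I J) (A.submatrix I fun _ : Fin 1 => j)
        (A.submatrix (fun _ : Fin 1 => i) J) (A.submatrix (fun _ : Fin 1 => i) fun _ => j) := by
    ext (u | u) (v | v) <;> simp [Fin.snoc]
  rw [← det_submatrix_equiv_self finSumFinEquiv, hblocks, det_fromBlocks₁₁, invOf_eq_nonsing_inv,
    det_fin_one]
  simp [mul_apply]

lemma abs_inv_apply_le_of_abs_det_submatrix_le {R : Type*} [Field R] [LinearOrder R]
    [IsStrictOrderedRing R] {N : ℕ} (B : Matrix (Fin (N + 1)) (Fin (N + 1)) R) {d : R}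
    (hminor : ∀ f g : Fin N → Fin (N + 1), Function.Injective f → Function.Injective g →
      |(B.submatrix f g).det| ≤ d) (k l : Fin (N + 1)) :
    |B⁻¹ k l| ≤ d / |B.det| := by
  have hadj : |B.adjugate k l| ≤ d := by
    rw [adjugate_fin_succ_eq_det_submatrix, abs_mul, abs_pow, abs_neg, abs_one, one_pow, one_mul]
    exact hminor _ _ Fin.succAbove_right_injective Fin.succAbove_right_injective
  rw [inv_def, smul_apply, smul_eq_mul, Ring.inverse_eq_inv', abs_mul, abs_inv, inv_mul_eq_div]
  exact div_le_div_of_nonneg_right hadj (abs_nonneg _)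

lemma dotProduct_conjTranspose_mul_self_mulVec {m n : Type*} [Fintype m] [Fintype n]
    (A : Matrix m n ℝ) (x : n → ℝ) :
    x ⬝ᵥ ((Aᴴ * A) *ᵥ x) = (A *ᵥ x) ⬝ᵥ (A *ᵥ x) := by
  rw [← mulVec_mulVec, dotProduct_mulVec, conjTranspose_eq_transpose_of_trivial, vecMul_transpose]

lemma dotProduct_mulVec_self_le {m n : Type*} [Fintype m] [Fintype n] (M : Matrix m n ℝ) {c : ℝ}
    (hc : ∀ i j, |M i j| ≤ c) (v : n → ℝ) :
    (M *ᵥ v) ⬝ᵥ (M *ᵥ v) ≤ Fintype.card m * (Fintype.card n * c ^ 2) * (v ⬝ᵥ v) := by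
  have hrow : ∀ i, ∑ j, M i j ^ 2 ≤ Fintype.card n * c ^ 2 := fun i => by
    simpa using Finset.sum_le_card_nsmul Finset.univ _ _ fun j _ =>
      (sq_abs (M i j)).symm.trans_le (pow_le_pow_left₀ (abs_nonneg _) (hc i j) 2)
  calc (M *ᵥ v) ⬝ᵥ (M *ᵥ v) = ∑ i, (∑ j, M i j * v j) ^ 2 := by simp [dotProduct, mulVec, sq]
    _ ≤ ∑ i, (∑ j, M i j ^ 2) * ∑ j, v j ^ 2 :=
        Finset.sum_le_sum fun i _ => Finset.sum_mul_sq_le_sq_mul_sq _ _ _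
    _ ≤ ∑ _i : m, Fintype.card n * c ^ 2 * ∑ j, v j ^ 2 :=
        Finset.sum_le_sum fun i _ =>
          mul_le_mul_of_nonneg_right (hrow i) (Finset.sum_nonneg fun j _ => sq_nonneg _)
    _ = Fintype.card m * (Fintype.card n * c ^ 2) * (v ⬝ᵥ v) := by
        simp [dotProduct, sq, mul_assoc]

lemma dotProduct_submatrix_mulVec_le {m n k : Type*} [Fintype m] [Fintype n] [Fintype k]
    (A : Matrix m n ℝ) {f : k → m} (hf : Function.Injective f) (y : n → ℝ) :
    (A.submatrix f id *ᵥ y) ⬝ᵥ (A.submatrix f id *ᵥ y) ≤ (A *ᵥ y) ⬝ᵥ (A *ᵥ y) := by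
  calc (A.submatrix f id *ᵥ y) ⬝ᵥ (A.submatrix f id *ᵥ y)
      = ∑ i ∈ Finset.univ.map ⟨f, hf⟩, (A *ᵥ y) i * (A *ᵥ y) i := by
        rw [Finset.sum_map]; rfl
    _ ≤ (A *ᵥ y) ⬝ᵥ (A *ᵥ y) := Finset.sum_le_univ_sum_of_nonneg fun i => mul_self_nonneg _

namespace IsHermitian

section

variable {n : Type*} [Fintype n] [DecidableEq n] {M : Matrix n n ℝ} (hM : M.IsHermitian)

lemma dotProduct_mulVec_eq_sum_eigenvalues (x : n → ℝ) :
    x ⬝ᵥ (M *ᵥ x) =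
      ∑ k, hM.eigenvalues k * (star (hM.eigenvectorUnitary : Matrix n n ℝ) *ᵥ x) k ^ 2 := by
  conv_lhs => rw [hM.spectral_theorem]
  simp only [Unitary.conjStarAlgAut_apply, RCLike.ofReal_real_eq_id, Function.id_comp]
  rw [← mulVec_mulVec, ← mulVec_mulVec, dotProduct_mulVec, ← mulVec_transpose,
    ← conjTranspose_eq_transpose_of_trivial, ← star_eq_conjTranspose]
  simp only [dotProduct, mulVec_diagonal]
  exact Finset.sum_congr rfl fun k _ => by ring

lemma dotProduct_self_eq_sum_eigenvectorUnitary (x : n → ℝ) :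
    x ⬝ᵥ x = ∑ k, (star (hM.eigenvectorUnitary : Matrix n n ℝ) *ᵥ x) k ^ 2 := by
  have h := dotProduct_conjTranspose_mul_self_mulVec (star (hM.eigenvectorUnitary : Matrix n n ℝ)) x
  rw [← star_eq_conjTranspose, star_star,
    mem_unitaryGroup_iff.mp hM.eigenvectorUnitary.2, one_mulVec] at h
  rw [h]
  simp only [dotProduct, sq]

end

/-- The easy half of the Courant–Fischer minimax principle. -/
lemma le_eigenvalues_sort {n : ℕ} {M : Matrix (Fin n) (Fin n) ℝ} (hM : M.IsHermitian)
    (V : Submodule ℝ (Fin n → ℝ)) (p : Fin n) (hV : n ≤ Module.finrank ℝ V + p) {μ : ℝ}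
    (hμ : ∀ x ∈ V, μ * (x ⬝ᵥ x) ≤ x ⬝ᵥ (M *ᵥ x)) :
    μ ≤ hM.eigenvalues (Tuple.sort hM.eigenvalues p) := by
  set σ := Tuple.sort hM.eigenvalues
  -- the coordinates along the eigenvectors beyond the `p`-th smallest eigenvalue
  let f : V →ₗ[ℝ] (Finset.Ioi p → ℝ) := LinearMap.funLeft ℝ ℝ (σ ∘ Subtype.val) ∘ₗ
    toLin' (star (hM.eigenvectorUnitary : Matrix (Fin n) (Fin n) ℝ)) ∘ₗ V.subtype
  have hdim : Module.finrank ℝ (Finset.Ioi p → ℝ) < Module.finrank ℝ V := by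
    rw [Module.finrank_fintype_fun_eq_card, Fintype.card_coe, Fin.card_Ioi]
    omega
  obtain ⟨⟨x, hxV⟩, hxker, hx0⟩ :=
    (LinearMap.ker f).ne_bot_iff.mp (LinearMap.ker_ne_bot_of_finrank_lt hdim)
  have hz : ∀ q, p < q →
      (star (hM.eigenvectorUnitary : Matrix (Fin n) (Fin n) ℝ) *ᵥ x) (σ q) = 0 := fun q hq =>
    congrFun (LinearMap.mem_ker.mp hxker) ⟨q, Finset.mem_Ioi.mpr hq⟩
  have hupper : x ⬝ᵥ (M *ᵥ x) ≤ hM.eigenvalues (σ p) * (x ⬝ᵥ x) := by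
    rw [hM.dotProduct_mulVec_eq_sum_eigenvalues, hM.dotProduct_self_eq_sum_eigenvectorUnitary,
      Finset.mul_sum]
    refine Finset.sum_le_sum fun k _ => ?_
    obtain ⟨q, rfl⟩ := σ.surjective k
    rcases le_or_gt q p with hqp | hpq
    · exact mul_le_mul_of_nonneg_right (Tuple.monotone_sort hM.eigenvalues hqp) (sq_nonneg _)
    · simp [hz q hpq]
  have hpos : 0 < x ⬝ᵥ x := by
    refine lt_of_le_of_ne ?_ (Ne.symm (dotProduct_self_eq_zero.not.mpr ?_))
    · simpa using dotProduct_star_self_nonneg x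
    · simpa using hx0
  exact le_of_mul_le_mul_right ((hμ x hxV).trans hupper) hpos

end IsHermitian

end Matrix

lemma sval_nonneg {m n : ℕ} (A : Matrix (Fin m) (Fin n) ℝ) (k : Fin n) : 0 ≤ sval A k :=
  Real.sqrt_nonneg _

theorem le_sval_of_forall_sq_mul_le {m n : ℕ} (A : Matrix (Fin m) (Fin n) ℝ) (k : Fin n)
    {J : Fin (k + 1) → Fin n} (hJ : Function.Injective J) {c : ℝ}
    (h : ∀ y, c ^ 2 * (y ⬝ᵥ y) ≤ (A.submatrix id J *ᵥ y) ⬝ᵥ (A.submatrix id J *ᵥ y)) :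
    c ≤ sval A k := by
  set S : Matrix (Fin n) (Fin (k + 1)) ℝ := (1 : Matrix (Fin n) (Fin n) ℝ).submatrix id J
  have hS : Sᴴ * S = 1 := by
    ext a b
    simp [S, mul_apply, one_apply, hJ.eq_iff]
  have hAS : A * S = A.submatrix id J := by
    simpa using mul_submatrix_one (Equiv.refl _) J A
  have hSinj : Function.Injective (toLin' S) := fun y y' hyy' => by
    simpa only [toLin'_apply, mulVec_mulVec, hS, one_mulVec] using congrArg (Sᴴ *ᵥ ·) hyy'
  refine (le_abs_self c).trans <| Real.abs_le_sqrt <|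
    (isHermitian_conjTranspose_mul_self A).le_eigenvalues_sort (LinearMap.range (toLin' S)) _ ?_ ?_
  · rw [LinearMap.finrank_range_of_inj hSinj, Module.finrank_fin_fun, Fin.val_rev]
    omega
  · rintro _ ⟨y, rfl⟩
    have := h y
    rwa [toLin'_apply, dotProduct_conjTranspose_mul_self_mulVec, mulVec_mulVec, hAS,
      ← dotProduct_conjTranspose_mul_self_mulVec, hS, one_mulVec]

theorem abs_sub_crossApprox_apply_le {m n r : ℕ} (hrn : r < n) (A : Matrix (Fin m) (Fin n) ℝ)
    (I : Fin r → Fin m) (J : Fin r → Fin n) (hinv : IsUnit (A.submatrix I J))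
    (hmax : ∀ (I' : Fin r → Fin m) (J' : Fin r → Fin n),
      Function.Injective I' → Function.Injective J' →
        |(A.submatrix I' J').det| ≤ |(A.submatrix I J).det|) (i : Fin m) (j : Fin n) :
    |(A - A.submatrix id J * (A.submatrix I J)⁻¹ * A.submatrix I id) i j|
      ≤ (r + 1) * sval A ⟨r, hrn⟩ := by
  set e := (A - A.submatrix id J * (A.submatrix I J)⁻¹ * A.submatrix I id) i j
  rcases eq_or_ne e 0 with he | he
  · rw [he, abs_zero]
    exact mul_nonneg (by positivity) (sval_nonneg A _)
  set I₁ : Fin (r + 1) → Fin m := Fin.snoc I i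
  set J₁ : Fin (r + 1) → Fin n := Fin.snoc J j
  set B := A.submatrix I₁ J₁
  have hdetB : B.det = (A.submatrix I J).det * e := det_submatrix_snoc A I J hinv i j
  have hdet : (A.submatrix I J).det ≠ 0 := ((isUnit_iff_isUnit_det _).mp hinv).ne_zero
  have hB : B.det ≠ 0 := hdetB ▸ mul_ne_zero hdet he
  obtain ⟨hI₁, hJ₁⟩ := injective_of_det_submatrix_ne_zero hB
  have hBinv : ∀ k l, |B⁻¹ k l| ≤ |e|⁻¹ := fun k l => by
    have := B.abs_inv_apply_le_of_abs_det_submatrix_le (fun f g hf hg => by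
      simpa only [B, submatrix_submatrix] using hmax _ _ (hI₁.comp hf) (hJ₁.comp hg)) k l
    rwa [hdetB, abs_mul, div_mul_cancel_left₀ (abs_ne_zero.mpr hdet)] at this
  have hbound : ∀ y, (|e| / (r + 1)) ^ 2 * (y ⬝ᵥ y)
      ≤ (A.submatrix id J₁ *ᵥ y) ⬝ᵥ (A.submatrix id J₁ *ᵥ y) := fun y => by
    have hy : y ⬝ᵥ y ≤ (r + 1) * ((r + 1) * (|e|⁻¹) ^ 2) * ((B *ᵥ y) ⬝ᵥ (B *ᵥ y)) := by
      simpa [mulVec_mulVec, nonsing_inv_mul B (isUnit_iff_ne_zero.mpr hB)]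
        using B⁻¹.dotProduct_mulVec_self_le hBinv (B *ᵥ y)
    have hrows := (A.submatrix id J₁).dotProduct_submatrix_mulVec_le hI₁ y
    calc (|e| / (r + 1)) ^ 2 * (y ⬝ᵥ y)
        ≤ (|e| / (r + 1)) ^ 2 * ((r + 1) * ((r + 1) * (|e|⁻¹) ^ 2) * ((B *ᵥ y) ⬝ᵥ (B *ᵥ y))) :=
          mul_le_mul_of_nonneg_left hy (sq_nonneg _)
      _ = (B *ᵥ y) ⬝ᵥ (B *ᵥ y) := by field_simp
      _ ≤ _ := hrows
  have := le_sval_of_forall_sq_mul_le A ⟨r, hrn⟩ hJ₁ hbound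
  rwa [div_le_iff₀ (by positivity), mul_comm] at this

theorem stmt9_general {m n r : ℕ} (hrn : r < n)
    (A : Matrix (Fin m) (Fin n) ℝ) (I : Fin r → Fin m) (J : Fin r → Fin n)
    (hinv : IsUnit (A.submatrix I J))
    (hmax : ∀ (I' : Fin r → Fin m) (J' : Fin r → Fin n),
      Function.Injective I' → Function.Injective J' →
        |(A.submatrix I' J').det| ≤ |(A.submatrix I J).det|) :
    chebNorm (A - A.submatrix id J * (A.submatrix I J)⁻¹ * A.submatrix I id)
      ≤ (r + 1) * sval A ⟨r, hrn⟩ := by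
  have h0 : 0 ≤ (r + 1 : ℝ) * sval A ⟨r, hrn⟩ := mul_nonneg (by positivity) (sval_nonneg A _)
  exact Real.iSup_le
    (fun i => Real.iSup_le (abs_sub_crossApprox_apply_le hrn A I J hinv hmax i) h0) h0

theorem stmt9 {m n r : ℕ} (hrm : r < m) (hrn : r < n)
    (A : Matrix (Fin m) (Fin n) ℝ) (I : Fin r → Fin m) (J : Fin r → Fin n)
    (hI : Function.Injective I) (hJ : Function.Injective J)
    (hinv : IsUnit (A.submatrix I J))
    (hmax : ∀ (I' : Fin r → Fin m) (J' : Fin r → Fin n),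
      Function.Injective I' → Function.Injective J' →
        |(A.submatrix I' J').det| ≤ |(A.submatrix I J).det|) :
    chebNorm (A - A.submatrix id J * (A.submatrix I J)⁻¹ * A.submatrix I id)
      ≤ (r + 1) * sval A ⟨r, hrn⟩ :=
  stmt9_general hrn A I J hinv hmax
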